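/- Let d ≥ 1, let p ≥ 1 be real, let R > 0, x₀ ∈ ℝ^d, and let s, ŝ : ℝ^d → ℝ^d be continuous vector fields. Suppose there exist δ > 0 and 0 < m ≤ M such that for every y ∈ ∂B_R(x₀): (a) ‖s(y) − ŝ(y)‖ < δ; (b) m < ‖s(y)‖ ≤ M and m < ‖ŝ(y)‖ ≤ M; (c) ‖t·s(y) + (1−t)·ŝ(y)‖ ≥ m for every t ∈ [0,1]. Then |Δ̄_p s(x₀) − Δ̄_p ŝ(x₀)| ≤ (σ(∂B_R(x₀)) / vol(B_R(x₀))) · C_p. -/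

import Mathlib

open MeasureTheory Metric
open scoped InnerProductSpace

/-- Boundary-formulation average p-Laplace of a vector field `s` at `x₀` with radius `R`:
`(1 / vol(B_R x₀)) ∫_{∂B_R x₀} ‖s y‖^(p-2) ⟪s y, (y - x₀)/R⟫ dσ(y)`,
where `σ` is the `(d-1)`-dimensional Hausdorff measure. -/
noncomputable def avgPLaplace (d : ℕ) (p : ℝ)
    (s : EuclideanSpace ℝ (Fin d) → EuclideanSpace ℝ (Fin d))
    (x₀ : EuclideanSpace ℝ (Fin d)) (R : ℝ) : ℝ :=
  (volume (ball x₀ R)).toReal⁻¹ *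
    ∫ y in sphere x₀ R, ‖s y‖ ^ (p - 2) * ⟪s y, R⁻¹ • (y - x₀)⟫_ℝ ∂(μH[(d : ℝ) - 1])

/-!
The integrand is `φ (s y)` with `φ v = ‖v‖ ^ (p - 2) * ⟪v, ν⟫` and `ν` the unit outer normal.
The derivative of `φ` at `v` has norm at most `(1 + |p - 2|) ‖v‖ ^ (p - 2)`, and on the segment
from `ŝ y` to `s y`, where `m ≤ ‖·‖ ≤ M`, this is at most `C_p / δ`. The mean value inequality
then bounds the difference of the integrands by `C_p` pointwise, and integrating over the sphere
gives the claim. The integrands are integrable because the sphere has finite `(d - 1)`-dimensional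
Hausdorff measure: by compactness it is covered by finitely many caps, each the image of a ball of
the tangent hyperplane `a + (ℝ ∙ a)ᗮ` under the `2`-Lipschitz central projection
`x ↦ x / ‖x‖`.
-/

open Module
open scoped Pointwise ENNReal

section PointwiseBound

variable {E : Type*} [NormedAddCommGroup E] [InnerProductSpace ℝ E]

theorem hasFDerivAt_norm_rpow_of_ne_zero (q : ℝ) {x : E} (hx : x ≠ 0) :
    HasFDerivAt (fun v : E => ‖v‖ ^ q) ((q * ‖x‖ ^ (q - 2)) • innerSL ℝ x) x := by
  convert ((hasStrictFDerivAt_norm_sq x).rpow_const (p := q / 2) (by simp [hx])).hasFDerivAt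
    using 1
  · ext v
    rw [← Real.rpow_natCast_mul (norm_nonneg v)]
    norm_num
    ring_nf
  · simp_rw [← Real.rpow_natCast_mul (norm_nonneg _), ← Nat.cast_smul_eq_nsmul ℝ, smul_smul]
    ring_nf

theorem hasFDerivAt_norm_rpow_mul_inner (q : ℝ) (n : E) {x : E} (hx : x ≠ 0) :
    HasFDerivAt (fun v : E => ‖v‖ ^ q * ⟪n, v⟫_ℝ)
      (‖x‖ ^ q • innerSL ℝ n + ⟪n, x⟫_ℝ • (q * ‖x‖ ^ (q - 2)) • innerSL ℝ x) x :=
  (hasFDerivAt_norm_rpow_of_ne_zero q hx).mul (innerSL ℝ n).hasFDerivAt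

theorem norm_fderiv_norm_rpow_mul_inner_le (q : ℝ) {n : E} (hn : ‖n‖ ≤ 1) {x : E} (hx : x ≠ 0) :
    ‖‖x‖ ^ q • innerSL ℝ n + ⟪n, x⟫_ℝ • (q * ‖x‖ ^ (q - 2)) • innerSL ℝ x‖ ≤
      (1 + |q|) * ‖x‖ ^ q := by
  have hx' : 0 < ‖x‖ := norm_pos_iff.2 hx
  have hpow : ‖x‖ ^ (q - 2) * ‖x‖ * ‖x‖ = ‖x‖ ^ q := by
    rw [Real.rpow_sub hx', Real.rpow_two]; field_simp
  have hrpow : 0 ≤ ‖x‖ ^ q := by positivity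
  calc _ ≤ ‖x‖ ^ q * ‖n‖ + |⟪n, x⟫_ℝ| * (|q| * ‖x‖ ^ (q - 2) * ‖x‖) := by
        refine (norm_add_le _ _).trans ?_
        simp only [norm_smul, innerSL_apply_norm, Real.norm_eq_abs, abs_mul,
          abs_of_nonneg hrpow, abs_of_nonneg (Real.rpow_nonneg hx'.le _), le_refl]
    _ ≤ ‖x‖ ^ q * 1 + ‖x‖ * (|q| * ‖x‖ ^ (q - 2) * ‖x‖) := by
        gcongr
        exact (abs_real_inner_le_norm n x).trans (by nlinarith [norm_nonneg x])
    _ = (1 + |q|) * ‖x‖ ^ q := by rw [← hpow]; ring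

theorem abs_norm_rpow_mul_inner_sub_le {q K : ℝ} {n v w : E} (hn : ‖n‖ ≤ 1)
    (hseg : ∀ x ∈ segment ℝ w v, x ≠ 0 ∧ (1 + |q|) * ‖x‖ ^ q ≤ K) :
    |‖v‖ ^ q * ⟪n, v⟫_ℝ - ‖w‖ ^ q * ⟪n, w⟫_ℝ| ≤ K * ‖v - w‖ := by
  simpa only [Real.norm_eq_abs] using Convex.norm_image_sub_le_of_norm_hasFDerivWithin_le
    (fun x hx => (hasFDerivAt_norm_rpow_mul_inner q n (hseg x hx).1).hasFDerivWithinAt)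
    (fun x hx => (norm_fderiv_norm_rpow_mul_inner_le q hn (hseg x hx).1).trans (hseg x hx).2)
    (convex_segment w v) (left_mem_segment ℝ w v) (right_mem_segment ℝ w v)

theorem one_add_abs_sub_two_mul_rpow_le {p m M r : ℝ} (hm : 0 < m) (hmr : m ≤ r) (hrM : r ≤ M) :
    (1 + |p - 2|) * r ^ (p - 2) ≤
      if 2 ≤ p then M ^ (p - 2) * (p - 1) else m ^ (p - 2) * (3 - p) := by
  split_ifs with hp
  · rw [abs_of_nonneg (sub_nonneg.2 hp)]
    calc (1 + (p - 2)) * r ^ (p - 2) ≤ (1 + (p - 2)) * M ^ (p - 2) := by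
          gcongr
          linarith
      _ = M ^ (p - 2) * (p - 1) := by ring
  · rw [abs_of_neg (by linarith)]
    calc (1 + -(p - 2)) * r ^ (p - 2) ≤ (1 + -(p - 2)) * m ^ (p - 2) :=
          mul_le_mul_of_nonneg_left (Real.rpow_le_rpow_of_nonpos hm hmr (by linarith))
            (by linarith)
      _ = m ^ (p - 2) * (3 - p) := by ring

theorem abs_norm_rpow_mul_inner_sub_le_of_segment {p m M δ : ℝ} {n v w : E}
    (hn : ‖n‖ ≤ 1) (hm : 0 < m) (hv : ‖v‖ ≤ M) (hw : ‖w‖ ≤ M) (hvw : ‖v - w‖ ≤ δ)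
    (hseg : ∀ t ∈ Set.Icc (0 : ℝ) 1, m ≤ ‖t • v + (1 - t) • w‖) :
    |‖v‖ ^ (p - 2) * ⟪v, n⟫_ℝ - ‖w‖ ^ (p - 2) * ⟪w, n⟫_ℝ| ≤
      if 2 ≤ p then δ * M ^ (p - 2) * (p - 1) else δ * m ^ (p - 2) * (3 - p) := by
  set K := if 2 ≤ p then M ^ (p - 2) * (p - 1) else m ^ (p - 2) * (3 - p) with hKdef
  have hbounds : ∀ x ∈ segment ℝ w v, m ≤ ‖x‖ ∧ ‖x‖ ≤ M := by
    intro x hx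
    refine ⟨?_, mem_closedBall_zero_iff.1 <| (convex_closedBall 0 M).segment_subset
      (mem_closedBall_zero_iff.2 hw) (mem_closedBall_zero_iff.2 hv) hx⟩
    rw [segment_eq_image] at hx
    obtain ⟨t, ht, rfl⟩ := hx
    simpa only [add_comm] using hseg t ht
  have hK : ∀ x ∈ segment ℝ w v, x ≠ 0 ∧ (1 + |p - 2|) * ‖x‖ ^ (p - 2) ≤ K := fun x hx =>
    ⟨norm_pos_iff.1 (hm.trans_le (hbounds x hx).1),
      one_add_abs_sub_two_mul_rpow_le hm (hbounds x hx).1 (hbounds x hx).2⟩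
  have hK0 : 0 ≤ K := le_trans (by positivity) (hK v (right_mem_segment ℝ w v)).2
  calc |‖v‖ ^ (p - 2) * ⟪v, n⟫_ℝ - ‖w‖ ^ (p - 2) * ⟪w, n⟫_ℝ|
      ≤ K * ‖v - w‖ := by
        simpa only [real_inner_comm n] using abs_norm_rpow_mul_inner_sub_le hn hK
    _ ≤ K * δ := by gcongr
    _ = _ := by rw [hKdef]; split_ifs <;> ring

end PointwiseBound

section SphereMeasure

theorem lipschitzOnWith_inv_norm_smul {F : Type*} [NormedAddCommGroup F] [NormedSpace ℝ F] :
    LipschitzOnWith 2 (fun x : F => ‖x‖⁻¹ • x) {x | 1 ≤ ‖x‖} := by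
  refine LipschitzOnWith.of_dist_le_mul fun x (hx : 1 ≤ ‖x‖) y (hy : 1 ≤ ‖y‖) => ?_
  have hx0 : 0 < ‖x‖ := one_pos.trans_le hx
  have hy0 : 0 < ‖y‖ := one_pos.trans_le hy
  have hcoeff : ‖x‖⁻¹ * (‖y‖ - ‖x‖) * ‖y‖⁻¹ = ‖x‖⁻¹ - ‖y‖⁻¹ := by field_simp
  have hsplit : ‖x‖⁻¹ • x - ‖y‖⁻¹ • y = ‖x‖⁻¹ • ((x - y) + (‖y‖ - ‖x‖) • (‖y‖⁻¹ • y)) := by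
    rw [smul_add, smul_smul, smul_smul, hcoeff, smul_sub, sub_smul]
    abel
  have hunit : ‖‖y‖⁻¹ • y‖ = 1 := norm_smul_inv_norm (norm_pos_iff.1 hy0)
  rw [dist_eq_norm, dist_eq_norm]
  calc ‖‖x‖⁻¹ • x - ‖y‖⁻¹ • y‖
      ≤ ‖x‖⁻¹ * (‖x - y‖ + |‖y‖ - ‖x‖| * 1) := by
        rw [hsplit, norm_smul, norm_inv, norm_norm, ← hunit, ← Real.norm_eq_abs, ← norm_smul]
        gcongr
        exact norm_add_le _ _
    _ ≤ 1 * (‖x - y‖ + ‖x - y‖ * 1) := by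
        gcongr
        · exact inv_le_one_of_one_le₀ hx
        · rw [abs_sub_comm]; exact abs_norm_sub_norm_le x y
    _ = (2 : NNReal) * ‖x - y‖ := by push_cast; ring

variable {E : Type*} [NormedAddCommGroup E] [InnerProductSpace ℝ E]

noncomputable def sphereChart (a : E) (y : (ℝ ∙ a)ᗮ) : E := ‖a + y‖⁻¹ • (a + y)

theorem lipschitzWith_sphereChart {a : E} (ha : ‖a‖ = 1) : LipschitzWith 2 (sphereChart a) := by
  have hshift : LipschitzWith 1 (fun y : (ℝ ∙ a)ᗮ => a + (y : E)) :=
    ((isometry_vadd E a).comp isometry_subtype_coe).lipschitz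
  have hmaps : Set.MapsTo (fun y : (ℝ ∙ a)ᗮ => a + (y : E)) Set.univ {x | 1 ≤ ‖x‖} := by
    intro y _
    have hy : ⟪a, (y : E)⟫_ℝ = 0 := Submodule.mem_orthogonal_singleton_iff_inner_right.1 y.2
    have hpythagoras := norm_add_sq_eq_norm_sq_add_norm_sq_real hy
    simp only [Set.mem_ofPred_eq]
    nlinarith [norm_nonneg (a + (y : E)), mul_self_nonneg ‖(y : E)‖]
  have h := lipschitzOnWith_univ.1
    (lipschitzOnWith_inv_norm_smul.comp hshift.lipschitzOnWith hmaps)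
  rwa [mul_one] at h

theorem sphere_inter_subset_image_sphereChart {a : E} (ha : ‖a‖ = 1) :
    sphere (0 : E) 1 ∩ {u | 1 / 2 < ⟪a, u⟫_ℝ} ⊆ sphereChart a '' closedBall 0 3 := by
  rintro u ⟨hu, hau : 1 / 2 < ⟪a, u⟫_ℝ⟩
  rw [mem_sphere_zero_iff_norm] at hu
  set c := ⟪a, u⟫_ℝ
  have hc : 0 < c := by linarith
  have hy : c⁻¹ • u - a ∈ (ℝ ∙ a)ᗮ := by
    rw [Submodule.mem_orthogonal_singleton_iff_inner_right, inner_sub_right, inner_smul_right,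
      real_inner_self_eq_norm_sq, ha]
    field_simp
    ring
  refine ⟨⟨_, hy⟩, ?_, ?_⟩
  · rw [mem_closedBall_zero_iff, Submodule.coe_norm]
    calc ‖c⁻¹ • u - a‖ ≤ c⁻¹ + 1 := by
          refine (norm_sub_le _ _).trans_eq ?_
          rw [norm_smul, hu, ha, Real.norm_of_nonneg (inv_nonneg.2 hc.le), mul_one]
      _ ≤ 3 := by
          have : c⁻¹ ≤ 2 := by rw [inv_le_comm₀ hc two_pos]; linarith
          linarith
  · simp only [sphereChart, add_sub_cancel, norm_smul, hu,
      Real.norm_of_nonneg (inv_nonneg.2 hc.le), mul_one, inv_inv, smul_smul,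
      mul_inv_cancel₀ hc.ne', one_smul]

theorem hausdorffMeasure_unitSphere_lt_top [MeasurableSpace E] [BorelSpace E] {n : ℕ}
    (hE : finrank ℝ E = n + 1) : μH[(n : ℝ)] (sphere (0 : E) 1) < ∞ := by
  have : Fact (finrank ℝ E = n + 1) := ⟨hE⟩
  have : FiniteDimensional ℝ E := .of_fact_finrank_eq_succ n
  obtain ⟨t, hcover⟩ := (isCompact_sphere (0 : E) 1).elim_finite_subcover
    (fun a : sphere (0 : E) 1 => {u | 1 / 2 < ⟪(a : E), u⟫_ℝ})
    (fun a => isOpen_lt continuous_const (continuous_const.inner continuous_id))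
    (fun u hu => Set.mem_iUnion.2 ⟨⟨u, hu⟩, by norm_num [mem_sphere_zero_iff_norm.1 hu]⟩)
  have hsub : sphere (0 : E) 1 ⊆ ⋃ a ∈ t, sphereChart (a : E) '' closedBall 0 3 := fun u hu => by
    obtain ⟨a, ha, hua⟩ := Set.mem_iUnion₂.1 (hcover hu)
    exact Set.mem_biUnion ha
      (sphere_inter_subset_image_sphereChart (mem_sphere_zero_iff_norm.1 a.2) ⟨hu, hua⟩)
  refine (measure_mono hsub).trans_lt (measure_biUnion_lt_top t.finite_toSet fun a _ => ?_)
  have hdim : finrank ℝ (ℝ ∙ (a : E))ᗮ = n :=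
    Submodule.finrank_orthogonal_span_singleton (ne_zero_of_mem_unit_sphere a)
  refine ((lipschitzWith_sphereChart (mem_sphere_zero_iff_norm.1 a.2)).hausdorffMeasure_image_le
    n.cast_nonneg _).trans_lt (ENNReal.mul_lt_top (by simp) ?_)
  rw [← hdim]
  exact (isCompact_closedBall _ _).measure_lt_top

theorem hausdorffMeasure_sphere_lt_top [MeasurableSpace E] [BorelSpace E] {n : ℕ}
    (hE : finrank ℝ E = n + 1) (x : E) {r : ℝ} (hr : 0 < r) :
    μH[(n : ℝ)] (sphere x r) < ∞ := by
  have hsphere : sphere x r = x +ᵥ r • sphere (0 : E) 1 := by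
    rw [smul_sphere' hr.ne', smul_zero, vadd_sphere, vadd_eq_add, add_zero,
      Real.norm_of_nonneg hr.le, mul_one]
  rw [hsphere, hausdorffMeasure_vadd _ (.inl n.cast_nonneg),
    Measure.hausdorffMeasure_smul₀ n.cast_nonneg hr.ne']
  exact ENNReal.mul_lt_top (by simp) (hausdorffMeasure_unitSphere_lt_top hE)

end SphereMeasure

section Flux

variable {E : Type*} [NormedAddCommGroup E] [InnerProductSpace ℝ E]

noncomputable def pLaplaceFlux (p : ℝ) (s : E → E) (x₀ : E) (R : ℝ) (y : E) : ℝ :=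
  ‖s y‖ ^ (p - 2) * ⟪s y, R⁻¹ • (y - x₀)⟫_ℝ

theorem integrableOn_sphere_pLaplaceFlux [ProperSpace E] [MeasurableSpace E]
    [OpensMeasurableSpace E] {μ : Measure E} {p R : ℝ} {s : E → E} {x₀ : E}
    (hμ : μ (sphere x₀ R) ≠ ⊤) (hs : Continuous s) (hs0 : ∀ y ∈ sphere x₀ R, s y ≠ 0) :
    IntegrableOn (pLaplaceFlux p s x₀ R) (sphere x₀ R) μ := by
  have hcont : ContinuousOn (pLaplaceFlux p s x₀ R) (sphere x₀ R) :=
    (hs.norm.continuousOn.rpow_const fun y hy => .inl (norm_ne_zero_iff.2 (hs0 y hy))).mul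
      (hs.inner (continuous_const.smul (continuous_id.sub continuous_const))).continuousOn
  exact hcont.integrableOn_of_subset_isCompact (isCompact_sphere x₀ R)
    isClosed_sphere.measurableSet subset_rfl hμ

end Flux

theorem avgPLaplace_eq (d : ℕ) (p : ℝ) (s : EuclideanSpace ℝ (Fin d) → EuclideanSpace ℝ (Fin d))
    (x₀ : EuclideanSpace ℝ (Fin d)) (R : ℝ) :
    avgPLaplace d p s x₀ R = (volume (ball x₀ R)).toReal⁻¹ *
      ∫ y in sphere x₀ R, pLaplaceFlux p s x₀ R y ∂(μH[(d : ℝ) - 1]) := rfl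

theorem abs_avgPLaplace_sub_le {d : ℕ} {p R C : ℝ} {x₀ : EuclideanSpace ℝ (Fin d)}
    {s sHat : EuclideanSpace ℝ (Fin d) → EuclideanSpace ℝ (Fin d)}
    (hσ : μH[(d : ℝ) - 1] (sphere x₀ R) < ⊤)
    (hs : IntegrableOn (pLaplaceFlux p s x₀ R) (sphere x₀ R) μH[(d : ℝ) - 1])
    (hsHat : IntegrableOn (pLaplaceFlux p sHat x₀ R) (sphere x₀ R) μH[(d : ℝ) - 1])
    (hC : ∀ y ∈ sphere x₀ R, |pLaplaceFlux p s x₀ R y - pLaplaceFlux p sHat x₀ R y| ≤ C) :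
    |avgPLaplace d p s x₀ R - avgPLaplace d p sHat x₀ R| ≤
      ((μH[(d : ℝ) - 1] (sphere x₀ R)).toReal / (volume (ball x₀ R)).toReal) * C := by
  have hint : ‖∫ y in sphere x₀ R, (pLaplaceFlux p s x₀ R y - pLaplaceFlux p sHat x₀ R y)
      ∂μH[(d : ℝ) - 1]‖ ≤ C * (μH[(d : ℝ) - 1] (sphere x₀ R)).toReal :=
    norm_setIntegral_le_of_norm_le_const hσ hC
  rw [avgPLaplace_eq, avgPLaplace_eq, ← mul_sub, ← integral_sub hs hsHat, abs_mul,
    abs_of_nonneg (by positivity), ← Real.norm_eq_abs]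
  calc _ ≤ (volume (ball x₀ R)).toReal⁻¹ * (C * (μH[(d : ℝ) - 1] (sphere x₀ R)).toReal) := by
        gcongr
    _ = _ := by ring

theorem avgPLaplace_error_bound_general (d : ℕ) (hd : 1 ≤ d) (p : ℝ)
    (R : ℝ) (hR : 0 < R) (x₀ : EuclideanSpace ℝ (Fin d))
    (s sHat : EuclideanSpace ℝ (Fin d) → EuclideanSpace ℝ (Fin d))
    (hs : Continuous s) (hsHat : Continuous sHat)
    (δ m M : ℝ) (hm : 0 < m)
    (ha : ∀ y ∈ sphere x₀ R, ‖s y - sHat y‖ < δ)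
    (hb : ∀ y ∈ sphere x₀ R,
      (m < ‖s y‖ ∧ ‖s y‖ ≤ M) ∧ (m < ‖sHat y‖ ∧ ‖sHat y‖ ≤ M))
    (hc : ∀ y ∈ sphere x₀ R, ∀ t ∈ Set.Icc (0 : ℝ) 1, m ≤ ‖t • s y + (1 - t) • sHat y‖) :
    |avgPLaplace d p s x₀ R - avgPLaplace d p sHat x₀ R| ≤
      ((μH[(d : ℝ) - 1] (sphere x₀ R)).toReal / (volume (ball x₀ R)).toReal) *
        (if 2 ≤ p then δ * M ^ (p - 2) * (p - 1) else δ * m ^ (p - 2) * (3 - p)) := by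
  obtain ⟨n, rfl⟩ := Nat.exists_eq_add_of_le' hd
  have hσ : μH[((n + 1 : ℕ) : ℝ) - 1] (sphere x₀ R) < ⊤ := by
    simpa using hausdorffMeasure_sphere_lt_top finrank_euclideanSpace_fin x₀ hR
  have hnormal : ∀ y ∈ sphere x₀ R, ‖R⁻¹ • (y - x₀)‖ ≤ 1 := fun y hy => by
    rw [norm_smul, norm_inv, Real.norm_of_nonneg hR.le, ← dist_eq_norm, mem_sphere.1 hy,
      inv_mul_cancel₀ hR.ne']
  refine abs_avgPLaplace_sub_le hσ
    (integrableOn_sphere_pLaplaceFlux hσ.ne hs fun y hy =>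
      norm_pos_iff.1 (hm.trans (hb y hy).1.1))
    (integrableOn_sphere_pLaplaceFlux hσ.ne hsHat fun y hy =>
      norm_pos_iff.1 (hm.trans (hb y hy).2.1))
    fun y hy => ?_
  exact abs_norm_rpow_mul_inner_sub_le_of_segment (hnormal y hy) hm (hb y hy).1.2
    (hb y hy).2.2 (ha y hy).le (hc y hy)

/-- error bound for the boundary-formulation average p-Laplace. -/
theorem avgPLaplace_error_bound (d : ℕ) (hd : 1 ≤ d) (p : ℝ) (hp : 1 ≤ p)
    (R : ℝ) (hR : 0 < R) (x₀ : EuclideanSpace ℝ (Fin d))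
    (s sHat : EuclideanSpace ℝ (Fin d) → EuclideanSpace ℝ (Fin d))
    (hs : Continuous s) (hsHat : Continuous sHat)
    (δ m M : ℝ) (hδ : 0 < δ) (hm : 0 < m) (hmM : m ≤ M)
    (ha : ∀ y ∈ sphere x₀ R, ‖s y - sHat y‖ < δ)
    (hb : ∀ y ∈ sphere x₀ R,
      (m < ‖s y‖ ∧ ‖s y‖ ≤ M) ∧ (m < ‖sHat y‖ ∧ ‖sHat y‖ ≤ M))
    (hc : ∀ y ∈ sphere x₀ R, ∀ t ∈ Set.Icc (0 : ℝ) 1, m ≤ ‖t • s y + (1 - t) • sHat y‖) :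
    |avgPLaplace d p s x₀ R - avgPLaplace d p sHat x₀ R| ≤
      ((μH[(d : ℝ) - 1] (sphere x₀ R)).toReal / (volume (ball x₀ R)).toReal) *
        (if 2 ≤ p then δ * M ^ (p - 2) * (p - 1) else δ * m ^ (p - 2) * (3 - p)) :=
  avgPLaplace_error_bound_general d hd p R hR x₀ s sHat hs hsHat δ m M hm ha hb hc
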